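/- Consider the Game of Graph Nim on the graph H₁ (path A–B–C–D with edges AB, BC, CD, plus a disjoint edge EF). Let k ≥ 1, let r be the unique natural number with 2^r ≤ k < 2^{r+1}, let m ≥ 0, and let s satisfy 1 ≤ s ≤ k. If w(EF) = k, w(BC) = s, and {w(AB), w(CD)} = {2^{r+1}·m, 2^{r+1}·m + k − s} (with both of these weights positive), then the configuration is a losing position for the player to move. -/

import Mathlib

namespace GraphNim

variable {V E : Type} [Fintype E]

/-- A legal move in the Game of Graph Nim: choose a vertex `v` and weakly decrease
the weights of edges incident to `v` (all other edges unchanged), strictly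
decreasing the total weight. -/
def Move (inc : V → E → Prop) (w w' : E → ℕ) : Prop :=
  ∃ v : V, (∀ e, w' e ≤ w e) ∧ (∀ e, ¬ inc v e → w' e = w e) ∧
    (∑ e, w' e) < (∑ e, w e)

/-- A configuration is losing for the player to move: every legal move leads to a
non-losing configuration (the all-zero configuration is vacuously losing). -/
def Losing (inc : V → E → Prop) (w : E → ℕ) : Prop :=
  ∀ w', Move inc w w' → ¬ Losing inc w'
termination_by ∑ e, w e
decreasing_by
  rename_i h
  obtain ⟨v, _, _, h3⟩ := h
  exact h3

/-- A configuration is winning for the player to move: some legal move leads to a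
losing configuration. -/
def Winning (inc : V → E → Prop) (w : E → ℕ) : Prop :=
  ∃ w', Move inc w w' ∧ Losing inc w'

end GraphNim

open GraphNim

/-- Endpoints of the edges of the graph `H₁` (path `A–B–C–D` plus a disjoint edge
`EF`): vertices `A = 0, …, F = 5`, edges `AB = 0, BC = 1, CD = 2, EF = 3`. -/
def h1Ends : Fin 4 → Fin 6 × Fin 6
  | 0 => (0, 1)
  | 1 => (1, 2)
  | 2 => (2, 3)
  | 3 => (4, 5)

def h1Inc (v : Fin 6) (e : Fin 4) : Prop := (h1Ends e).1 = v ∨ (h1Ends e).2 = v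

/-! The following positions of `H₁` are losing: those with `w(BC) = 0` and
`w(AB) xor w(CD) = w(EF)` (three-heap Nim), and those with `2 ^ n ∣ w(AB)`, `w(EF) < 2 ^ n` and
`w(CD) - w(AB) = w(EF) - w(BC) ≥ 0`. Every move out of this set can be answered by a move back
into it: in the second family the answer either restores the balance
`w(CD) - w(AB) = w(EF) - w(BC)` or, when `AB` or `CD` has dropped below the old `w(AB)`, empties
`BC` and completes a Nim position; this is possible because xor with `w(EF) < 2 ^ n` cannot reach
the multiple `w(AB)` of `2 ^ n` from below. The theorem's configurations lie in the second family,
up to the reflection of `H₁` exchanging `AB` and `CD`. -/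

namespace GraphNim

variable {V E : Type} [Fintype E] {inc : V → E → Prop}

theorem Move.le {w w' : E → ℕ} (h : Move inc w w') (e : E) : w' e ≤ w e :=
  let ⟨_, hle, _⟩ := h; hle e

theorem Move.sum_lt {w w' : E → ℕ} (h : Move inc w w') : ∑ e, w' e < ∑ e, w e :=
  let ⟨_, _, _, hlt⟩ := h; hlt

theorem losing_of_forall_move_exists_move (S : (E → ℕ) → Prop)
    (hS : ∀ w, S w → ∀ w', Move inc w w' → ∃ w'', Move inc w' w'' ∧ S w'') :
    ∀ w, S w → Losing inc w := by
  intro w hw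
  induction hsum : ∑ e, w e using Nat.strong_induction_on generalizing w with
  | _ n ih =>
    rw [Losing]
    intro w' hmove hw'
    obtain ⟨w'', hmove', hw''⟩ := hS w hw w' hmove
    rw [Losing] at hw'
    exact hw' w'' hmove' (ih _ (hsum ▸ hmove'.sum_lt.trans hmove.sum_lt) w'' hw'' rfl)

variable {V' E' : Type} [Fintype E'] {inc' : V' → E' → Prop}

theorem move_comp_equiv_iff (π : V ≃ V') (σ : E ≃ E') (hinc : ∀ v e, inc' (π v) (σ e) ↔ inc v e)
    {w w' : E' → ℕ} : Move inc (w ∘ σ) (w' ∘ σ) ↔ Move inc' w w' := by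
  simp only [Move, Function.comp_apply, Equiv.sum_comp, π.surjective.exists, σ.surjective.forall,
    hinc]

theorem losing_comp_equiv_iff (π : V ≃ V') (σ : E ≃ E')
    (hinc : ∀ v e, inc' (π v) (σ e) ↔ inc v e) {w : E' → ℕ} :
    Losing inc (w ∘ σ) ↔ Losing inc' w := by
  induction hsum : ∑ e, w e using Nat.strong_induction_on generalizing w with
  | _ n ih =>
    rw [Losing, Losing]
    constructor
    · intro h w' hmove hw'
      refine h (w' ∘ σ) ((move_comp_equiv_iff π σ hinc).2 hmove) ?_
      exact (ih _ (hsum ▸ hmove.sum_lt) rfl).2 hw'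
    · intro h u hmove hu
      obtain ⟨w', rfl⟩ : ∃ w' : E' → ℕ, u = w' ∘ σ := ⟨u ∘ σ.symm, by ext; simp⟩
      have hmove' := (move_comp_equiv_iff π σ hinc).1 hmove
      exact h w' hmove' ((ih _ (hsum ▸ hmove'.sum_lt) rfl).1 hu)

end GraphNim

theorem Nat.xor_lt_of_lt_of_two_pow_dvd {n a b c : ℕ} (ha : 2 ^ n ∣ a) (hc : c < a)
    (hb : b < 2 ^ n) : c ^^^ b < a := by
  obtain ⟨m, rfl⟩ := ha
  rw [mul_comm] at hc ⊢
  rw [← Nat.div_lt_iff_lt_mul (Nat.two_pow_pos n)] at hc ⊢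
  rwa [Nat.xor_div_two_pow, Nat.div_eq_of_lt hb, Nat.xor_zero]

open GraphNim

instance : DecidableRel h1Inc := fun _ _ => inferInstanceAs (Decidable (_ ∨ _))

theorem h1_losing_comp_swap_iff {w : Fin 4 → ℕ} :
    Losing h1Inc (w ∘ Equiv.swap 0 2) ↔ Losing h1Inc w :=
  losing_comp_equiv_iff ((Equiv.swap 0 3).trans (Equiv.swap 1 2)) (Equiv.swap 0 2) (by decide)

section Moves

variable {w w' : Fin 4 → ℕ}

theorem h1_move_cases (h : Move h1Inc w w') :
    (w' 2 = w 2 ∧ w' 3 = w 3) ∨ (w' 0 = w 0 ∧ w' 3 = w 3) ∨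
      (w' 0 = w 0 ∧ w' 1 = w 1 ∧ w' 2 = w 2) := by
  obtain ⟨v, -, hfix, -⟩ := h
  fin_cases v
  iterate 2 exact Or.inl ⟨hfix 2 (by decide), hfix 3 (by decide)⟩
  iterate 2 exact Or.inr (Or.inl ⟨hfix 0 (by decide), hfix 3 (by decide)⟩)
  iterate 2 exact Or.inr (Or.inr ⟨hfix 0 (by decide), hfix 1 (by decide), hfix 2 (by decide)⟩)

theorem h1_sum_lt_of_move (h : Move h1Inc w w') :
    w' 0 + w' 1 + w' 2 + w' 3 < w 0 + w 1 + w 2 + w 3 := by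
  simpa only [Fin.sum_univ_four] using h.sum_lt

theorem h1_move_B {a b : ℕ} (ha : a ≤ w 0) (hb : b ≤ w 1) (hlt : a + b < w 0 + w 1) :
    Move h1Inc w ![a, b, w 2, w 3] := by
  refine ⟨1, fun e => ?_, fun e he => ?_, ?_⟩
  · fin_cases e <;> simp [ha, hb]
  · fin_cases e <;> first | rfl | exact absurd (by decide) he
  · simp [Fin.sum_univ_four]; omega

theorem h1_move_C {b c : ℕ} (hb : b ≤ w 1) (hc : c ≤ w 2) (hlt : b + c < w 1 + w 2) :
    Move h1Inc w ![w 0, b, c, w 3] := by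
  refine ⟨2, fun e => ?_, fun e he => ?_, ?_⟩
  · fin_cases e <;> simp [hb, hc]
  · fin_cases e <;> first | rfl | exact absurd (by decide) he
  · simp [Fin.sum_univ_four]; omega

theorem h1_move_D {c : ℕ} (hc : c < w 2) : Move h1Inc w ![w 0, w 1, c, w 3] := by
  refine ⟨3, fun e => ?_, fun e he => ?_, ?_⟩
  · fin_cases e <;> simp [hc.le]
  · fin_cases e <;> first | rfl | exact absurd (by decide) he
  · simp [Fin.sum_univ_four]; omega

theorem h1_move_E {k : ℕ} (hk : k < w 3) : Move h1Inc w ![w 0, w 1, w 2, k] := by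
  refine ⟨4, fun e => ?_, fun e he => ?_, ?_⟩
  · fin_cases e <;> simp [hk.le]
  · fin_cases e <;> first | rfl | exact absurd (by decide) he
  · simp [Fin.sum_univ_four]; omega

end Moves

def H1PPosition (w : Fin 4 → ℕ) : Prop :=
  (w 1 = 0 ∧ w 0 ^^^ w 2 = w 3) ∨
    ∃ n d, 2 ^ n ∣ w 0 ∧ w 2 = w 0 + d ∧ w 3 = w 1 + d ∧ w 3 < 2 ^ n

theorem h1PPosition_of_xor {a b c k : ℕ} (hb : b = 0) (hk : a ^^^ c = k) :
    H1PPosition ![a, b, c, k] :=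
  Or.inl ⟨hb, hk⟩

theorem h1PPosition_of_dvd {a b c k : ℕ} (n d : ℕ) (ha : 2 ^ n ∣ a) (hc : c = a + d)
    (hk : k = b + d) (hlt : k < 2 ^ n) : H1PPosition ![a, b, c, k] :=
  Or.inr ⟨n, d, ha, hc, hk, hlt⟩

section Replies

variable {w w' : Fin 4 → ℕ}

theorem h1_exists_move_h1PPosition_of_xor_ne (hb : w 1 = 0) (hne : w 0 ^^^ w 2 ≠ w 3) :
    ∃ w', Move h1Inc w w' ∧ H1PPosition w' := by
  have hxor : w 0 ^^^ w 2 ^^^ w 3 ≠ 0 := by rwa [Ne, Nat.xor_eq_zero_iff]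
  rcases Nat.xor_trichotomy hxor with h | h | h
  · exact ⟨_, h1_move_B (a := w 3 ^^^ w 2) (b := 0) (Nat.xor_comm (w 2) _ ▸ h.le) (Nat.zero_le _)
      (by rw [Nat.xor_comm] at h; omega), h1PPosition_of_xor rfl (Nat.xor_xor_cancel_right _ _)⟩
  · exact ⟨_, h1_move_D h, h1PPosition_of_xor hb (by rw [Nat.xor_comm, Nat.xor_xor_cancel_right])⟩
  · exact ⟨_, h1_move_E h, h1PPosition_of_xor hb rfl⟩

theorem h1_xor_ne_of_move (hb : w 1 = 0) (hk : w 0 ^^^ w 2 = w 3) (h : Move h1Inc w w') :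
    w' 1 = 0 ∧ w' 0 ^^^ w' 2 ≠ w' 3 := by
  have hb' : w' 1 = 0 := Nat.eq_zero_of_le_zero (hb ▸ h.le 1)
  refine ⟨hb', fun hk' => ?_⟩
  have hsum := h1_sum_lt_of_move h
  rcases h1_move_cases h with ⟨h2, h3⟩ | ⟨h0, h3⟩ | ⟨h0, -, h2⟩
  · rw [h2, h3, ← hk, Nat.xor_left_inj] at hk'
    omega
  · rw [h0, h3, ← hk, Nat.xor_right_inj] at hk'
    omega
  · rw [h0, h2, hk] at hk'
    omega

theorem h1_exists_move_h1PPosition_of_dvd (n d : ℕ) (ha : 2 ^ n ∣ w 0) (hc : w 2 = w 0 + d)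
    (hk : w 3 = w 1 + d) (hlt : w 3 < 2 ^ n) (h : Move h1Inc w w') :
    ∃ w'', Move h1Inc w' w'' ∧ H1PPosition w'' := by
  have hsum := h1_sum_lt_of_move h
  rcases h1_move_cases h with ⟨h2, h3⟩ | ⟨h0, h3⟩ | ⟨h0, h1, h2⟩
  · rcases (h.le 0).eq_or_lt with h0 | h0
    · exact ⟨_, h1_move_E (k := w' 1 + d) (by omega), h1PPosition_of_dvd n d (h0 ▸ ha) (by omega) rfl
        (by omega)⟩
    · have hx := Nat.xor_lt_of_lt_of_two_pow_dvd ha h0 (h3 ▸ hlt)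
      exact ⟨_, h1_move_C (b := 0) (c := w' 0 ^^^ w' 3) (Nat.zero_le _) (by omega) (by omega),
        h1PPosition_of_xor rfl (Nat.xor_xor_cancel_left _ _)⟩
  · rcases le_or_gt (w 0) (w' 2) with h2 | h2
    · exact ⟨_, h1_move_E (k := w' 1 + (w' 2 - w 0)) (by omega),
        h1PPosition_of_dvd n (w' 2 - w 0) (h0 ▸ ha) (by omega) rfl (by omega)⟩
    · have hx := Nat.xor_lt_of_lt_of_two_pow_dvd ha h2 (h3 ▸ hlt)
      exact ⟨_, h1_move_B (a := w' 2 ^^^ w' 3) (b := 0) (by omega) (Nat.zero_le _) (by omega),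
        h1PPosition_of_xor rfl (by rw [Nat.xor_comm (w' 2), Nat.xor_xor_cancel_right])⟩
  · have h3 : w' 3 < w 3 := by omega
    rcases le_or_gt (w 1) (w' 3) with hb | hb
    · exact ⟨_, h1_move_D (c := w' 0 + (w' 3 - w 1)) (by omega),
        h1PPosition_of_dvd n (w' 3 - w 1) (h0 ▸ ha) rfl (by omega) (by omega)⟩
    · exact ⟨_, h1_move_C (b := w' 3) (c := w' 0) (by omega) (by omega) (by omega),
        h1PPosition_of_dvd n 0 (h0 ▸ ha) (by omega) (by omega) (by omega)⟩

end Replies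

theorem h1_losing_of_h1PPosition {w : Fin 4 → ℕ} (hw : H1PPosition w) : Losing h1Inc w := by
  refine losing_of_forall_move_exists_move H1PPosition (fun w hw w' h => ?_) w hw
  rcases hw with ⟨hb, hk⟩ | ⟨n, d, ha, hc, hk, hlt⟩
  · obtain ⟨hb', hne⟩ := h1_xor_ne_of_move hb hk h
    exact h1_exists_move_h1PPosition_of_xor_ne hb' hne
  · exact h1_exists_move_h1PPosition_of_dvd n d ha hc hk hlt h

theorem h1_losing_r0_general (w : Fin 4 → ℕ) (k r m s : ℕ)
    (hr2 : k < 2 ^ (r + 1))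
    (hs2 : s ≤ k)
    (hEF : w 3 = k) (hBC : w 1 = s)
    (hset : (w 0 = 2 ^ (r + 1) * m ∧ w 2 = 2 ^ (r + 1) * m + k - s) ∨
            (w 0 = 2 ^ (r + 1) * m + k - s ∧ w 2 = 2 ^ (r + 1) * m)) :
    Losing h1Inc w := by
  have hdvd : 2 ^ (r + 1) ∣ 2 ^ (r + 1) * m := dvd_mul_right _ _
  rcases hset with ⟨h0, h2⟩ | ⟨h0, h2⟩
  · exact h1_losing_of_h1PPosition (Or.inr ⟨r + 1, k - s, h0 ▸ hdvd, by omega, by omega, by omega⟩)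
  · refine h1_losing_comp_swap_iff.1 (h1_losing_of_h1PPosition (Or.inr ⟨r + 1, k - s, ?_⟩))
    exact ⟨show _ ∣ w 2 from h2 ▸ hdvd, show w 0 = w 2 + _ by omega, show w 3 = w 1 + _ by omega,
      show w 3 < _ by omega⟩

/-- On `H₁`: if `w(EF) = k ≥ 1` with `2^r ≤ k < 2^(r+1)`, `w(BC) = s` with
`1 ≤ s ≤ k`, and `{w(AB), w(CD)} = {2^(r+1)·m, 2^(r+1)·m + k − s}` (both
positive), then the configuration is losing for the player to move. -/
theorem h1_losing_r0 (w : Fin 4 → ℕ) (k r m s : ℕ)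
    (hk : 1 ≤ k) (hr1 : 2 ^ r ≤ k) (hr2 : k < 2 ^ (r + 1))
    (hs1 : 1 ≤ s) (hs2 : s ≤ k)
    (hEF : w 3 = k) (hBC : w 1 = s)
    (hset : (w 0 = 2 ^ (r + 1) * m ∧ w 2 = 2 ^ (r + 1) * m + k - s) ∨
            (w 0 = 2 ^ (r + 1) * m + k - s ∧ w 2 = 2 ^ (r + 1) * m))
    (hAB : 0 < w 0) (hCD : 0 < w 2) :
    Losing h1Inc w :=
  h1_losing_r0_general w k r m s hr2 hs2 hEF hBC hset
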